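/- arXiv:1307.7253 — 2 statements merged into one kernel-verified Lean document; each statement's English description precedes it below -/
import Mathlib

section
/- Suppose M({x : ‖x‖ > 1}) < ∞, fix a ∈ E, and define a^{<0>} := a and a^{<j+1>} := (1/2)(a^{<j>} + ∫_{{x : ‖x‖ > 1}} x ‖x‖^{−2} M^{<j>}(dx)) for j ≥ 0, where M^{<0>} := M. Then for every integer m ≥ 1, a^{<m>} = 2^{−m} ( a + ∫_{{x : ‖x‖ > 1}} x ‖x‖^{−2} ∑_{j=0}^{m−1} (2 ln ‖x‖)^j / j! · M(dx) ) = 2^{−m} ( a + (1/Γ(m)) ∫_{{x : ‖x‖ > 1}} x · Γ(m, 2 ln ‖x‖) M(dx) ), where Γ(m,x) := ∫_x^∞ e^{−t} t^{m−1} dt is the incomplete gamma function. -/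
/-!
Write `S = {x | 1 < ‖x‖}` and `K_k(x) = (log ‖x‖)^k / k! · x / ‖x‖²`, so that the shift integrand
`x ‖x‖⁻²` is `K_0`. Dilating by `t ∈ (0, 1)` moves points towards the origin, so on `S` the measure
`ν^{<1>}` only sees `ν` restricted to `S`, and Fubini gives
`∫_S K_k dν^{<1>} = ∫_S ∫_{1/‖x‖}^1 K_k(t x) dt dν(x) = ∫_S K_{k+1} dν`,
the inner integral being `∫_{1/r}^1 log(t r)^k / t dt = (log r)^{k+1} / (k+1)`; all integrals are
finite because `‖K_k‖ ≤ 1` on `S`. Hence `∫_S K_0 dM^{<j>} = ∫_S K_j dM`, and unrolling the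
recursion `2^{j+1} a^{<j+1>} = 2^j a^{<j>} + 2^j ∫_S K_j dM` gives the first formula. The second
follows from `Γ(m, y) = (m-1)! e^{-y} ∑_{j<m} y^j / j!` at `y = 2 log ‖x‖`.
-/

open MeasureTheory Real

/-- The (upper) incomplete gamma function `Γ(a, x) = ∫_x^∞ e^{-t} t^{a-1} dt`. -/
noncomputable def incGamma (a x : ℝ) : ℝ := ∫ t in Set.Ioi x, Real.exp (-t) * t ^ (a - 1)

open Filter Finset
open scoped Nat Topology

theorem hasDerivAt_exp_neg_mul_sum_range (n : ℕ) (t : ℝ) :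
    HasDerivAt (fun t => exp (-t) * ∑ j ∈ range (n + 1), t ^ j / (j ! : ℝ))
      (-(exp (-t) * t ^ n / n !)) t := by
  have hexp : HasDerivAt (fun t => exp (-t)) (-exp (-t)) t := by
    simpa using (hasDerivAt_neg t).exp
  induction n with
  | zero => simpa using hexp
  | succ n ih =>
    have hsplit : (fun t => exp (-t) * ∑ j ∈ range (n + 1 + 1), t ^ j / (j ! : ℝ)) =
        fun t => exp (-t) * ∑ j ∈ range (n + 1), t ^ j / (j ! : ℝ) +
          exp (-t) * (t ^ (n + 1) / ((n + 1)! : ℝ)) := by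
      funext s
      rw [sum_range_succ, mul_add]
    rw [hsplit]
    refine (ih.fun_add (hexp.fun_mul ((hasDerivAt_pow (n + 1) t).div_const _))).congr_deriv ?_
    rw [Nat.factorial_succ, Nat.add_sub_cancel]
    push_cast
    field_simp
    ring

theorem tendsto_exp_neg_mul_sum_range (n : ℕ) :
    Tendsto (fun t => exp (-t) * ∑ j ∈ range (n + 1), t ^ j / (j ! : ℝ)) atTop (𝓝 0) := by
  simp only [mul_sum]
  simpa using tendsto_finsetSum (range (n + 1)) fun j _ =>
    ((tendsto_pow_mul_exp_neg_atTop_nhds_zero j).div_const (j ! : ℝ)).congr fun t => by ring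

theorem incGamma_nat_add_one (n : ℕ) {x : ℝ} (hx : 0 ≤ x) :
    incGamma (n + 1) x = n ! * exp (-x) * ∑ j ∈ range (n + 1), x ^ j / (j ! : ℝ) := by
  set f := fun t => exp (-t) * ∑ j ∈ range (n + 1), t ^ j / (j ! : ℝ)
  have hderiv (t : ℝ) : HasDerivAt (fun t => -(n ! * f t)) (exp (-t) * t ^ n) t := by
    refine ((hasDerivAt_exp_neg_mul_sum_range n t).const_mul (n ! : ℝ)).fun_neg.congr_deriv ?_
    field_simp
  have h := integral_Ioi_of_hasDerivAt_of_nonneg (hderiv x).continuousAt.continuousWithinAt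
    (fun t _ => hderiv t) (fun t ht => by have : 0 < t := hx.trans_lt ht; positivity)
    (by simpa using ((tendsto_exp_neg_mul_sum_range n).const_mul (n ! : ℝ)).neg)
  simp only [incGamma, add_sub_cancel_right, rpow_natCast, h]
  rw [zero_sub, neg_neg, mul_assoc]

theorem Gamma_inv_mul_incGamma_two_mul_log (m : ℕ) {r : ℝ} (hr : 1 ≤ r) :
    (Gamma m)⁻¹ * incGamma m (2 * log r) =
      (∑ j ∈ range m, (2 * log r) ^ j / (j ! : ℝ)) / r ^ 2 := by
  cases m with
  | zero => simp
  | succ n =>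
    have hexp : exp (-(2 * log r)) = (r ^ 2)⁻¹ := by
      rw [exp_neg, mul_comm, exp_mul, exp_log (by linarith)]
      norm_cast
    push_cast
    rw [Gamma_nat_eq_factorial, incGamma_nat_add_one n (by have := log_nonneg hr; positivity),
      hexp]
    field_simp

theorem integral_Ioo_log_mul_pow_div (k : ℕ) {r : ℝ} (hr : 1 ≤ r) :
    ∫ t in Set.Ioo r⁻¹ 1, log (t * r) ^ k / t = log r ^ (k + 1) / (k + 1) := by
  have hr0 : 0 < r := one_pos.trans_le hr
  have hpos {t : ℝ} (ht : t ∈ Set.uIcc r⁻¹ 1) : 0 < t :=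
    (inv_pos.2 hr0).trans_le (Set.uIcc_of_le (inv_le_one_of_one_le₀ hr) ▸ ht).1
  have hderiv (t : ℝ) (ht : t ∈ Set.uIcc r⁻¹ 1) :
      HasDerivAt (fun t => log (t * r) ^ (k + 1) / (k + 1)) (log (t * r) ^ k / t) t := by
    have htr : t * r ≠ 0 := (mul_pos (hpos ht) hr0).ne'
    refine (((hasDerivAt_mul_const r).log htr).pow (k + 1) |>.div_const _).congr_deriv ?_
    have := (hpos ht).ne'
    field_simp
    push_cast
    ring
  have hcont : ContinuousOn (fun t => log (t * r) ^ k / t) (Set.uIcc r⁻¹ 1) :=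
    ((continuousOn_id.mul continuousOn_const).log fun t ht => (mul_pos (hpos ht) hr0).ne').pow k
      |>.div continuousOn_id fun t ht => (hpos ht).ne'
  rw [← integral_Ioc_eq_integral_Ioo,
    ← intervalIntegral.integral_of_le (inv_le_one_of_one_le₀ hr),
    intervalIntegral.integral_eq_sub_of_hasDerivAt hderiv hcont.intervalIntegrable,
    inv_mul_cancel₀ hr0.ne', log_one, one_mul]
  simp

section LogKernel

variable {E : Type*} [NormedAddCommGroup E] [NormedSpace ℝ E]

noncomputable def logKernel (k : ℕ) (x : E) : E := (log ‖x‖ ^ k / k ! / ‖x‖ ^ 2) • x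

theorem logKernel_zero (x : E) : logKernel 0 x = (‖x‖ ^ 2)⁻¹ • x := by
  simp [logKernel]

theorem norm_logKernel_le_one (k : ℕ) {x : E} (hx : 1 ≤ ‖x‖) : ‖logKernel k x‖ ≤ 1 := by
  have hx0 : 0 < ‖x‖ := one_pos.trans_le hx
  have hlog : log ‖x‖ ^ k / k ! ≤ ‖x‖ := by
    simpa [exp_log hx0] using pow_div_factorial_le_exp (log ‖x‖) (log_nonneg hx) k
  rw [logKernel, norm_smul, norm_of_nonneg (by have := log_nonneg hx; positivity)]
  calc log ‖x‖ ^ k / k ! / ‖x‖ ^ 2 * ‖x‖ ≤ ‖x‖ / ‖x‖ ^ 2 * ‖x‖ := by gcongr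
    _ = 1 := by field_simp

theorem sum_two_pow_smul_logKernel (m : ℕ) (x : E) :
    ∑ j ∈ range m, (2 : ℝ) ^ j • logKernel j x =
      ((∑ j ∈ range m, (2 * log ‖x‖) ^ j / (j ! : ℝ)) / ‖x‖ ^ 2) • x := by
  simp only [logKernel, smul_smul, ← sum_smul, sum_div, mul_pow]
  congr 1
  refine sum_congr rfl fun j _ => ?_
  ring

theorem logKernel_smul {k : ℕ} {t : ℝ} (ht : 0 < t) (x : E) :
    logKernel k (t • x) = ((k ! * ‖x‖ ^ 2)⁻¹ * (log (t * ‖x‖) ^ k / t)) • x := by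
  rw [logKernel, norm_smul, norm_of_nonneg ht.le, smul_smul]
  rcases eq_or_ne ‖x‖ 0 with hx | hx
  · simp [hx]
  · congr 1
    field_simp

theorem integral_Ioo_indicator_logKernel_smul [CompleteSpace E] (k : ℕ) {x : E}
    (hx : 1 < ‖x‖) :
    ∫ t in Set.Ioo (0 : ℝ) 1, {y : E | 1 < ‖y‖}.indicator (logKernel k) (t • x) =
      logKernel (k + 1) x := by
  have hx0 : 0 < ‖x‖ := one_pos.trans hx
  have hindicator : ∀ t ∈ Set.Ioo (0 : ℝ) 1,
      {y : E | 1 < ‖y‖}.indicator (logKernel k) (t • x) = (Set.Ioi ‖x‖⁻¹).indicator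
        (fun t => ((k ! * ‖x‖ ^ 2)⁻¹ * (log (t * ‖x‖) ^ k / t)) • x) t := by
    intro t ht
    have hmem : t • x ∈ {y : E | 1 < ‖y‖} ↔ t ∈ Set.Ioi ‖x‖⁻¹ := by
      simp [norm_smul, abs_of_pos ht.1, inv_lt_iff_one_lt_mul₀ hx0]
    by_cases h : t ∈ Set.Ioi ‖x‖⁻¹
    · rw [Set.indicator_of_mem (hmem.2 h), Set.indicator_of_mem h, logKernel_smul ht.1]
    · rw [Set.indicator_of_notMem (mt hmem.1 h), Set.indicator_of_notMem h]
  have hIoo : Set.Ioi ‖x‖⁻¹ ∩ Set.Ioo 0 1 = Set.Ioo ‖x‖⁻¹ 1 := by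
    rw [Set.Ioi_inter_Ioo, max_eq_left (by positivity)]
  rw [setIntegral_congr_fun measurableSet_Ioo hindicator, integral_indicator measurableSet_Ioi,
    Measure.restrict_restrict measurableSet_Ioi, hIoo, integral_smul_const, integral_const_mul,
    integral_Ioo_log_mul_pow_div k hx.le, logKernel]
  congr 1
  push_cast [Nat.factorial_succ]
  field_simp

end LogKernel

theorem measurableSet_lt_norm {E : Type*} [NormedAddCommGroup E] [MeasurableSpace E]
    [OpensMeasurableSpace E] (R : ℝ) : MeasurableSet {x : E | R < ‖x‖} :=
  measurableSet_lt measurable_const measurable_norm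

section DilationAverage

variable {E : Type*} [NormedAddCommGroup E] [NormedSpace ℝ E]
  [MeasurableSpace E] [BorelSpace E] [SecondCountableTopology E]

/-- The paper's `ν^{<1>}`: for s-finite `ν`, its value on `A` is `∫₀¹ ν (t⁻¹ A) dt`. -/
noncomputable def dilationAverage (ν : Measure E) : Measure E :=
  ((volume.restrict (Set.Ioo (0 : ℝ) 1)).prod ν).map (Function.uncurry (· • ·))

instance (ν : Measure E) [IsFiniteMeasure ν] : IsFiniteMeasure (dilationAverage ν) := by
  unfold dilationAverage
  infer_instance

/-- Dilating by `t ∈ (0, 1)` cannot move a point into `{x | R < ‖x‖}` from outside. -/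
theorem restrict_eq_restrict_dilationAverage {μ ν : Measure E} {R : ℝ} (hR : 0 ≤ R)
    [SFinite (ν.restrict {x | R < ‖x‖})]
    (h : ∀ A : Set E, MeasurableSet A → A ⊆ {(0 : E)}ᶜ →
      μ A = ∫⁻ t in Set.Ioo (0 : ℝ) 1, ν ((fun x => t • x) ⁻¹' A)) :
    μ.restrict {x | R < ‖x‖} =
      (dilationAverage (ν.restrict {x | R < ‖x‖})).restrict {x | R < ‖x‖} := by
  set S := {x : E | R < ‖x‖}
  have hS : MeasurableSet S := measurableSet_lt_norm R
  ext A hA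
  have hAS := hA.inter hS
  rw [Measure.restrict_apply hA, Measure.restrict_apply hA, dilationAverage,
    Measure.map_apply measurable_smul hAS, Measure.prod_apply (measurable_smul hAS),
    h _ hAS fun x hx => by simpa using (hR.trans_lt hx.2).ne']
  refine setLIntegral_congr_fun measurableSet_Ioo fun t ht => ?_
  have hsub : (fun x => t • x) ⁻¹' (A ∩ S) ⊆ S := fun x hx => by
    have : R < t * ‖x‖ := by simpa [S, norm_smul, abs_of_pos ht.1] using hx.2
    exact this.trans_le (mul_le_of_le_one_left (norm_nonneg x) ht.2.le)
  rw [Measure.restrict_apply' hS]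
  exact congrArg ν (Set.inter_eq_left.2 hsub).symm

theorem integral_dilationAverage {F : Type*} [NormedAddCommGroup F] [NormedSpace ℝ F]
    {ν : Measure E} [SFinite ν] {f : E → F} (hf : Integrable f (dilationAverage ν)) :
    ∫ x, f x ∂(dilationAverage ν) = ∫ x, (∫ t in Set.Ioo (0 : ℝ) 1, f (t • x)) ∂ν := by
  rw [dilationAverage, integral_map measurable_smul.aemeasurable hf.1]
  exact integral_prod_symm _ (hf.comp_measurable measurable_smul)

end DilationAverage

section Iteration

variable {E : Type*} [NormedAddCommGroup E] [NormedSpace ℝ E]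
  [MeasurableSpace E] [BorelSpace E] [SecondCountableTopology E]

theorem measurable_logKernel (k : ℕ) : Measurable (logKernel (E := E) k) := by
  unfold logKernel
  fun_prop

theorem integrableOn_logKernel {μ : Measure E} [IsFiniteMeasure (μ.restrict {x | 1 < ‖x‖})]
    (k : ℕ) : IntegrableOn (logKernel k) {x | 1 < ‖x‖} μ := by
  refine Integrable.mono' (integrable_const 1) (measurable_logKernel k).aestronglyMeasurable ?_
  filter_upwards [ae_restrict_mem (measurableSet_lt_norm 1)] with x hx
  exact norm_logKernel_le_one k hx.le

theorem setIntegral_logKernel_dilationAverage [CompleteSpace E] {ν : Measure E}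
    [IsFiniteMeasure (ν.restrict {x | 1 < ‖x‖})] (k : ℕ) :
    ∫ x in {x | 1 < ‖x‖}, logKernel k x ∂(dilationAverage (ν.restrict {x | 1 < ‖x‖})) =
      ∫ x in {x | 1 < ‖x‖}, logKernel (k + 1) x ∂ν := by
  have hS := measurableSet_lt_norm (E := E) 1
  rw [← integral_indicator hS,
    integral_dilationAverage ((integrableOn_logKernel k).integrable_indicator hS)]
  refine integral_congr_ae ?_
  filter_upwards [ae_restrict_mem hS] with x hx
  exact integral_Ioo_indicator_logKernel_smul k hx

variable {Mit : ℕ → Measure E}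

theorem isFiniteMeasure_restrict_iterate [IsFiniteMeasure ((Mit 0).restrict {x | 1 < ‖x‖})]
    (hstep : ∀ j : ℕ, ∀ A : Set E, MeasurableSet A → A ⊆ {(0 : E)}ᶜ →
      Mit (j + 1) A = ∫⁻ t in Set.Ioo (0 : ℝ) 1, Mit j ((fun x => t • x) ⁻¹' A))
    (j : ℕ) : IsFiniteMeasure ((Mit j).restrict {x | 1 < ‖x‖}) := by
  induction j with
  | zero => infer_instance
  | succ j ih =>
    rw [restrict_eq_restrict_dilationAverage zero_le_one (hstep j)]
    infer_instance

theorem setIntegral_logKernel_iterate [CompleteSpace E]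
    [IsFiniteMeasure ((Mit 0).restrict {x | 1 < ‖x‖})]
    (hstep : ∀ j : ℕ, ∀ A : Set E, MeasurableSet A → A ⊆ {(0 : E)}ᶜ →
      Mit (j + 1) A = ∫⁻ t in Set.Ioo (0 : ℝ) 1, Mit j ((fun x => t • x) ⁻¹' A))
    (j k : ℕ) :
    ∫ x in {x | 1 < ‖x‖}, logKernel k x ∂(Mit j) =
      ∫ x in {x | 1 < ‖x‖}, logKernel (k + j) x ∂(Mit 0) := by
  induction j generalizing k with
  | zero => rfl
  | succ j ih =>
    have := isFiniteMeasure_restrict_iterate hstep j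
    rw [restrict_eq_restrict_dilationAverage zero_le_one (hstep j),
      setIntegral_logKernel_dilationAverage, ih, add_right_comm, add_assoc]

theorem sum_two_pow_smul_setIntegral_logKernel [CompleteSpace E] (μ : Measure E)
    [IsFiniteMeasure (μ.restrict {x | 1 < ‖x‖})] (m : ℕ) :
    ∑ j ∈ range m, (2 : ℝ) ^ j • ∫ x in {x | 1 < ‖x‖}, logKernel j x ∂μ =
      ∫ x in {x | 1 < ‖x‖},
        ((∑ j ∈ range m, (2 * log ‖x‖) ^ j / (j ! : ℝ)) / ‖x‖ ^ 2) • x ∂μ := by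
  simp only [← sum_two_pow_smul_logKernel, ← integral_smul]
  exact (integral_finsetSum _ fun j _ => (integrableOn_logKernel j).smul _).symm

end Iteration

theorem eq_two_pow_inv_smul_of_halving {F : Type*} [AddCommGroup F] [Module ℝ F] {v b : ℕ → F}
    (h : ∀ j, v (j + 1) = (2 : ℝ)⁻¹ • (v j + b j)) (p : ℕ) :
    v p = ((2 : ℝ) ^ p)⁻¹ • (v 0 + ∑ j ∈ range p, (2 : ℝ) ^ j • b j) := by
  induction p with
  | zero => simp
  | succ p ih =>
    rw [h, ih, sum_range_succ]
    match_scalars <;> field_simp <;> ring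

theorem shift_vector_iterated_general
    {E : Type*} [NormedAddCommGroup E] [NormedSpace ℝ E] [CompleteSpace E]
    [MeasurableSpace E] [BorelSpace E] [SecondCountableTopology E]
    (M : Measure E) (hM : M {x : E | 1 < ‖x‖} < ⊤)
    (Mit : ℕ → Measure E) (h0 : Mit 0 = M)
    (hstep : ∀ j : ℕ, ∀ A : Set E, MeasurableSet A → A ⊆ {(0:E)}ᶜ →
        Mit (j + 1) A = ∫⁻ t in Set.Ioo (0:ℝ) 1, Mit j ((fun x => t • x) ⁻¹' A))
    (a : E) (av : ℕ → E) (hav0 : av 0 = a)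
    (havstep : ∀ j : ℕ, av (j + 1) =
        (2 : ℝ)⁻¹ • (av j + ∫ x in {x : E | 1 < ‖x‖}, (‖x‖ ^ 2)⁻¹ • x ∂(Mit j)))
    (m : ℕ) :
    (av m = ((2 : ℝ) ^ m)⁻¹ •
        (a + ∫ x in {x : E | 1 < ‖x‖},
          ((∑ j ∈ Finset.range m, (2 * Real.log ‖x‖) ^ j / (j.factorial : ℝ)) / ‖x‖ ^ 2) • x ∂M))
    ∧ (av m = ((2 : ℝ) ^ m)⁻¹ •
        (a + (Real.Gamma m)⁻¹ •
          ∫ x in {x : E | 1 < ‖x‖}, incGamma m (2 * Real.log ‖x‖) • x ∂M)) := by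
  subst h0
  have : IsFiniteMeasure ((Mit 0).restrict {x | 1 < ‖x‖}) := ⟨by simpa using hM⟩
  have hshift (j : ℕ) : ∫ x in {x : E | 1 < ‖x‖}, (‖x‖ ^ 2)⁻¹ • x ∂(Mit j) =
      ∫ x in {x | 1 < ‖x‖}, logKernel j x ∂(Mit 0) := by
    simpa [logKernel_zero] using setIntegral_logKernel_iterate hstep j 0
  have hsum : av m = ((2 : ℝ) ^ m)⁻¹ • (a + ∫ x in {x : E | 1 < ‖x‖},
      ((∑ j ∈ range m, (2 * log ‖x‖) ^ j / (j ! : ℝ)) / ‖x‖ ^ 2) • x ∂(Mit 0)) := by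
    rw [eq_two_pow_inv_smul_of_halving havstep m, hav0]
    simp only [hshift]
    rw [sum_two_pow_smul_setIntegral_logKernel]
  refine ⟨hsum, hsum.trans ?_⟩
  rw [← integral_smul]
  congr 2
  refine setIntegral_congr_fun (measurableSet_lt_norm 1) fun x hx => ?_
  rw [smul_smul, Gamma_inv_mul_incGamma_two_mul_log m hx.le]

/-- Let `E` be a real separable Banach space and `M` a Borel measure on
`E ∖ {0}` with `M({x : ‖x‖ > 1}) < ∞`; fix `a ∈ E`. With `M^{<0>} := M`,
`M^{<j+1>}(A) := ∫_0^1 M^{<j>}(t⁻¹A) dt`, `a^{<0>} := a` and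
`a^{<j+1>} := (1/2)(a^{<j>} + ∫_{‖x‖>1} x ‖x‖⁻² M^{<j>}(dx))`, for every integer `m ≥ 1`:
`a^{<m>} = 2^{-m}(a + ∫_{‖x‖>1} x ‖x‖⁻² ∑_{j=0}^{m-1} (2 ln ‖x‖)^j / j! M(dx))
        = 2^{-m}(a + (1/Γ(m)) ∫_{‖x‖>1} x Γ(m, 2 ln ‖x‖) M(dx))`. -/
theorem shift_vector_iterated
    {E : Type*} [NormedAddCommGroup E] [NormedSpace ℝ E] [CompleteSpace E]
    [MeasurableSpace E] [BorelSpace E] [SecondCountableTopology E]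
    (M : Measure E) (hM : M {x : E | 1 < ‖x‖} < ⊤)
    (Mit : ℕ → Measure E) (h0 : Mit 0 = M)
    (hstep : ∀ j : ℕ, ∀ A : Set E, MeasurableSet A → A ⊆ {(0:E)}ᶜ →
        Mit (j + 1) A = ∫⁻ t in Set.Ioo (0:ℝ) 1, Mit j ((fun x => t • x) ⁻¹' A))
    (a : E) (av : ℕ → E) (hav0 : av 0 = a)
    (havstep : ∀ j : ℕ, av (j + 1) =
        (2 : ℝ)⁻¹ • (av j + ∫ x in {x : E | 1 < ‖x‖}, (‖x‖ ^ 2)⁻¹ • x ∂(Mit j)))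
    (m : ℕ) (hm : 1 ≤ m) :
    (av m = ((2 : ℝ) ^ m)⁻¹ •
        (a + ∫ x in {x : E | 1 < ‖x‖},
          ((∑ j ∈ Finset.range m, (2 * Real.log ‖x‖) ^ j / (j.factorial : ℝ)) / ‖x‖ ^ 2) • x ∂M))
    ∧ (av m = ((2 : ℝ) ^ m)⁻¹ •
        (a + (Real.Gamma m)⁻¹ •
          ∫ x in {x : E | 1 < ‖x‖}, incGamma m (2 * Real.log ‖x‖) • x ∂M)) :=
  shift_vector_iterated_general M hM Mit h0 hstep a av hav0 havstep m
end

section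
/- For every Borel set B ⊆ E ∖ {0}, ∫_0^∞ M_σ(e^{s}B) ds = M_{σ₂}(B) (equality in [0,∞]), where e^{s}B := {e^{s}x : x ∈ B} and σ₂ is the Borel measure on S × (0,2) given by dσ₂(u,z) = z^{−1} dσ(u,z). -/
/-! Each ray measure `map (· • u) (w^{-(z+1)} dw)` is homogeneous of degree `-z`: shrinking by
`e^{-s}` multiplies the mass of a set by `e^{-sz}`. By Tonelli the `s`-integral moves inside `σ`,
where `∫₀^∞ e^{-sz} ds = z⁻¹` because `z > 0` `σ`-almost everywhere. -/

open MeasureTheory Real ENNReal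

/-- The measure `M_σ` on `E ∖ {0}` associated with a finite Borel measure `σ` on
`S × (0,2)` (modelled as a measure on `E × ℝ` concentrated on the unit sphere times `(0,2)`):
`M_σ(B) = ∫_{S×(0,2)} (∫_0^∞ 1_B(w·u) w^{-(z+1)} dw) σ(d(u,z))`. -/
noncomputable def Msig {E : Type*} [NormedAddCommGroup E] [NormedSpace ℝ E]
    [MeasurableSpace E] [BorelSpace E] (σ : Measure (E × ℝ)) : Measure E :=
  σ.bind (fun p => Measure.map (fun w : ℝ => w • p.1)
    ((MeasureTheory.volume.restrict (Set.Ioi (0:ℝ))).withDensity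
        (fun w => ENNReal.ofReal (w ^ (-(p.2 + 1))))))

open Set

lemma map_mul_left_volume_restrict_Ioi {c : ℝ} (hc : 0 < c) :
    (volume.restrict (Ioi (0 : ℝ))).map (c * ·) =
      ENNReal.ofReal c⁻¹ • volume.restrict (Ioi 0) := by
  have hpre : (c * ·) ⁻¹' Ioi (0 : ℝ) = Ioi 0 := by ext w; simp [mul_pos_iff_of_pos_left hc]
  have hrestrict := (measurableEmbedding_mulLeft₀ hc.ne').restrict_map volume (Ioi 0)
  rw [hpre] at hrestrict
  rw [← hrestrict, Real.map_volume_mul_left hc.ne', Measure.restrict_smul,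
    abs_of_pos (inv_pos.mpr hc)]

noncomputable def powerLawMeasure (z : ℝ) : Measure ℝ :=
  (volume.restrict (Ioi 0)).withDensity fun w => ENNReal.ofReal (w ^ (-(z + 1)))

lemma lintegral_powerLawMeasure (z : ℝ) {f : ℝ → ℝ≥0∞} (hf : Measurable f) :
    ∫⁻ w, f w ∂powerLawMeasure z = ∫⁻ w in Ioi 0, ENNReal.ofReal (w ^ (-(z + 1))) * f w :=
  lintegral_withDensity_eq_lintegral_mul _ (by fun_prop) hf

lemma map_mul_left_powerLawMeasure (z : ℝ) {c : ℝ} (hc : 0 < c) :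
    (powerLawMeasure z).map (c * ·) = ENNReal.ofReal (c ^ z) • powerLawMeasure z := by
  refine Measure.ext_of_lintegral _ fun f hf => ?_
  set g : ℝ → ℝ≥0∞ := fun v => ENNReal.ofReal (v ^ (-(z + 1))) * f v
  have hg : Measurable g := by fun_prop
  have hdensity : ∀ w ∈ Ioi (0 : ℝ), ENNReal.ofReal (w ^ (-(z + 1))) * f (c * w)
      = ENNReal.ofReal (c ^ (z + 1)) * g (c * w) := by
    intro w hw
    rw [← mul_assoc, ← ENNReal.ofReal_mul (by positivity), Real.mul_rpow hc.le (le_of_lt hw),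
      ← mul_assoc, ← Real.rpow_add hc, add_neg_cancel, Real.rpow_zero, one_mul]
  calc ∫⁻ w, f w ∂(powerLawMeasure z).map (c * ·)
      = ∫⁻ w in Ioi 0, ENNReal.ofReal (w ^ (-(z + 1))) * f (c * w) := by
        rw [lintegral_map hf (measurable_const_mul c), lintegral_powerLawMeasure z (by fun_prop)]
    _ = ENNReal.ofReal (c ^ (z + 1)) * ∫⁻ v, g v ∂(volume.restrict (Ioi 0)).map (c * ·) := by
        rw [setLIntegral_congr_fun measurableSet_Ioi hdensity, lintegral_const_mul _ (by fun_prop),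
          lintegral_map hg (measurable_const_mul c)]
    _ = ENNReal.ofReal (c ^ z) * ∫⁻ w, f w ∂powerLawMeasure z := by
        rw [map_mul_left_volume_restrict_Ioi hc, lintegral_smul_measure, smul_eq_mul, ← mul_assoc,
          ← ENNReal.ofReal_mul (by positivity), Real.rpow_add_one hc.ne', mul_assoc,
          mul_inv_cancel₀ hc.ne', mul_one, lintegral_powerLawMeasure z hf]
    _ = ∫⁻ w, f w ∂(ENNReal.ofReal (c ^ z) • powerLawMeasure z) := by
        rw [lintegral_smul_measure, smul_eq_mul]

lemma lintegral_exp_neg_rpow_Ioi {z : ℝ} (hz : 0 < z) :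
    ∫⁻ s in Ioi 0, ENNReal.ofReal (Real.exp (-s) ^ z) = ENNReal.ofReal z⁻¹ := by
  have hexp : ∀ s : ℝ, Real.exp (-s) ^ z = Real.exp (-z * s) := fun s => by
    rw [← Real.exp_mul]; ring_nf
  simp_rw [hexp]
  rw [← ofReal_integral_eq_lintegral_ofReal (integrableOn_exp_mul_Ioi (neg_neg_of_pos hz) 0)
      (Filter.Eventually.of_forall fun s => (Real.exp_pos _).le),
    integral_exp_mul_Ioi (neg_neg_of_pos hz), mul_zero, Real.exp_zero, neg_div_neg_eq, one_div]

section RayMeasure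

variable {E : Type*} [NormedAddCommGroup E] [NormedSpace ℝ E] [MeasurableSpace E] [BorelSpace E]

noncomputable def rayMeasure (p : E × ℝ) : Measure E :=
  (powerLawMeasure p.2).map (· • p.1)

lemma lintegral_rayMeasure (p : E × ℝ) {f : E → ℝ≥0∞} (hf : Measurable f) :
    ∫⁻ x, f x ∂rayMeasure p =
      ∫⁻ w in Ioi 0, ENNReal.ofReal (w ^ (-(p.2 + 1))) * f (w • p.1) := by
  rw [rayMeasure, lintegral_map hf (by fun_prop), lintegral_powerLawMeasure _ (by fun_prop)]

lemma measurable_rayMeasure : Measurable (rayMeasure : E × ℝ → Measure E) := by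
  refine Measure.measurable_of_measurable_coe _ fun s hs => ?_
  simp_rw [← lintegral_indicator_one hs, lintegral_rayMeasure _ (measurable_one.indicator hs)]
  exact Measurable.lintegral_prod_right' (f := fun q : (E × ℝ) × ℝ =>
    ENNReal.ofReal (q.2 ^ (-(q.1.2 + 1))) * s.indicator 1 (q.2 • q.1.1)) (by fun_prop)

lemma rayMeasure_preimage_smul (p : E × ℝ) {c : ℝ} (hc : 0 < c) {B : Set E}
    (hB : MeasurableSet B) :
    rayMeasure p ((c • ·) ⁻¹' B) = ENNReal.ofReal (c ^ p.2) * rayMeasure p B := by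
  have hray : (· • p.1) ⁻¹' ((c • ·) ⁻¹' B) = (c * ·) ⁻¹' ((· • p.1) ⁻¹' B) := by
    ext w; simp [smul_smul]
  have hmeas : MeasurableSet ((fun w : ℝ => w • p.1) ⁻¹' B) :=
    measurable_id.smul_const p.1 hB
  rw [rayMeasure, Measure.map_apply (by fun_prop) (hB.preimage (measurable_const_smul c)), hray,
    ← Measure.map_apply (measurable_const_mul c) hmeas, map_mul_left_powerLawMeasure _ hc,
    Measure.smul_apply, smul_eq_mul, ← Measure.map_apply (by fun_prop) hB]

lemma Msig_apply (σ : Measure (E × ℝ)) {B : Set E} (hB : MeasurableSet B) :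
    Msig σ B = ∫⁻ p, rayMeasure p B ∂σ :=
  Measure.bind_apply hB measurable_rayMeasure.aemeasurable

end RayMeasure

theorem Msig_invariant_selfdec_transform_general
    {E : Type*} [NormedAddCommGroup E] [NormedSpace ℝ E]
    [MeasurableSpace E] [BorelSpace E]
    (σ : Measure (E × ℝ)) [IsFiniteMeasure σ]
    (hσ : σ {p : E × ℝ | ‖p.1‖ = 1 ∧ p.2 ∈ Set.Ioo (0:ℝ) 2}ᶜ = 0)
    (B : Set E) (hB : MeasurableSet B) :
    ∫⁻ s in Set.Ioi (0:ℝ), Msig σ ((fun x => Real.exp (-s) • x) ⁻¹' B)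
      = Msig (σ.withDensity (fun p => ENNReal.ofReal (p.2)⁻¹)) B := by
  have hz : ∀ᵐ p ∂σ, 0 < p.2 :=
    measure_mono_null (fun p hp => fun h => hp h.2.1) hσ
  have hκ : Measurable fun p : E × ℝ => rayMeasure p B :=
    Measure.measurable_coe hB |>.comp measurable_rayMeasure
  calc ∫⁻ s in Ioi 0, Msig σ ((fun x => Real.exp (-s) • x) ⁻¹' B)
      = ∫⁻ s in Ioi 0, ∫⁻ p, ENNReal.ofReal (Real.exp (-s) ^ p.2) * rayMeasure p B ∂σ := by
        refine lintegral_congr fun s => ?_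
        rw [Msig_apply σ (hB.preimage (measurable_const_smul _))]
        exact lintegral_congr fun p => rayMeasure_preimage_smul p (Real.exp_pos _) hB
    _ = ∫⁻ p, (∫⁻ s in Ioi 0, ENNReal.ofReal (Real.exp (-s) ^ p.2)) * rayMeasure p B ∂σ := by
        rw [lintegral_lintegral_swap (by fun_prop)]
        exact lintegral_congr fun p => lintegral_mul_const _ (by fun_prop)
    _ = ∫⁻ p, ENNReal.ofReal p.2⁻¹ * rayMeasure p B ∂σ :=
        lintegral_congr_ae (hz.mono fun p hp => by dsimp only; rw [lintegral_exp_neg_rpow_Ioi hp])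
    _ = Msig (σ.withDensity (fun p => ENNReal.ofReal (p.2)⁻¹)) B := by
        rw [Msig_apply _ hB, lintegral_withDensity_eq_lintegral_mul _ (by fun_prop) hκ]
        rfl

/-- For every Borel set `B ⊆ E ∖ {0}`,
`∫_0^∞ M_σ(e^s B) ds = M_{σ₂}(B)` in `[0,∞]`, where `e^s B = {e^s x : x ∈ B}` and
`dσ₂(u,z) = z⁻¹ dσ(u,z)`. -/
theorem Msig_invariant_selfdec_transform
    {E : Type*} [NormedAddCommGroup E] [NormedSpace ℝ E] [CompleteSpace E]
    [MeasurableSpace E] [BorelSpace E] [SecondCountableTopology E]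
    (σ : Measure (E × ℝ)) [IsFiniteMeasure σ]
    (hσ : σ {p : E × ℝ | ‖p.1‖ = 1 ∧ p.2 ∈ Set.Ioo (0:ℝ) 2}ᶜ = 0)
    (B : Set E) (hB : MeasurableSet B) (hB0 : B ⊆ {(0:E)}ᶜ) :
    ∫⁻ s in Set.Ioi (0:ℝ), Msig σ ((fun x => Real.exp (-s) • x) ⁻¹' B)
      = Msig (σ.withDensity (fun p => ENNReal.ofReal (p.2)⁻¹)) B :=
  Msig_invariant_selfdec_transform_general σ hσ B hB
end
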